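/- Let N be a finite set of non-monitors, σ = |N|, P a family of paths, and for v ∈ N let MSC(v) be the minimum size of W ⊆ N \ {v} with P_v ⊆ ⋃_{w∈W} P_w (MSC(v) := σ if none exists and also when some p ∈ P_v satisfies p ∩ N = {v}). Corollary: for k ≤ σ − 1, the maximum k-identifiable set S*(k) satisfies { v ∈ N : MSC(v) ≥ k + 1 } ⊆ S*(k) ⊆ { v ∈ N : MSC(v) ≥ k }, assuming P_v ≠ ∅ for all v ∈ N. -/

import Mathlib

variable {V : Type*} [DecidableEq V]

/-- A set `S` of non-monitors is `k`-identifiable: any two failure sets of size at most `k`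
that differ within `S` are distinguished by the failure state of some path. -/
def kIdent (N : Finset V) (P : Set (Finset V)) (S : Finset V) (k : ℕ) : Prop :=
  ∀ F₁ F₂ : Finset V, F₁ ⊆ N → F₂ ⊆ N → F₁.card ≤ k → F₂.card ≤ k →
    F₁ ∩ S ≠ F₂ ∩ S → ∃ p ∈ P, Xor' (p ∩ F₁ = ∅) (p ∩ F₂ = ∅)

open scoped Classical

/-- Minimum set cover number of the paths through `v` by path sets of other non-monitors;
set to `σ = |N|` when no cover exists, and also when `v` lies on a path whose only
non-monitor is `v`. -/
noncomputable def MSC (N : Finset V) (P : Set (Finset V)) (v : V) : ℕ :=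
  if (∃ p ∈ P, v ∈ p ∧ p ∩ N = {v}) ∨
      ¬ ∃ W : Finset V, W ⊆ N.erase v ∧ ∀ p ∈ P, v ∈ p → ∃ w ∈ W, w ∈ p
  then N.card
  else sInf {n | ∃ W : Finset V, W ⊆ N.erase v ∧ W.card = n ∧
    ∀ p ∈ P, v ∈ p → ∃ w ∈ W, w ∈ p}

/-!
A non-monitor `v` with `MSC(v) > k` is identified on its own: if `v` fails in `F₁` but not in
`F₂`, then `F₂` has at most `k` elements and so cannot cover all paths through `v`; a path
through `v` that misses `F₂` fails under `F₁` only. Conversely, a minimum cover `W` of the paths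
through `v` makes the failure sets `W` and `insert v W` indistinguishable, since every path
through `v` already meets `W`; when `MSC(v) < k` both have size at most `k`.
-/

section

open Finset

def CoversPathsThrough (P : Set (Finset V)) (v : V) (W : Finset V) : Prop :=
  ∀ p ∈ P, v ∈ p → ∃ w ∈ W, w ∈ p

variable {N W : Finset V} {P : Set (Finset V)} {v : V}

theorem MSC_le_card_of_covers (hW : W ⊆ N.erase v) (hcov : CoversPathsThrough P v W) :
    MSC N P v ≤ W.card := by
  have hno_private : ¬ ∃ p ∈ P, v ∈ p ∧ p ∩ N = {v} := by
    rintro ⟨p, hp, hvp, hpN⟩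
    obtain ⟨w, hwW, hwp⟩ := hcov p hp hvp
    have hw : w ∈ p ∩ N := mem_inter.2 ⟨hwp, (mem_erase.1 (hW hwW)).2⟩
    rw [hpN, mem_singleton] at hw
    exact (mem_erase.1 (hW hwW)).1 hw
  rw [MSC, if_neg (not_or.2 ⟨hno_private, not_not.2 ⟨W, hW, hcov⟩⟩)]
  exact Nat.sInf_le ⟨W, hW, rfl, hcov⟩

theorem exists_covers_card_eq_MSC (h : MSC N P v < N.card) :
    ∃ W ⊆ N.erase v, W.card = MSC N P v ∧ CoversPathsThrough P v W := by
  unfold MSC at h ⊢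
  split_ifs at h ⊢ with hcond
  · exact absurd h (lt_irrefl _)
  · obtain ⟨W₀, hW₀, hcov₀⟩ := not_not.1 (not_or.1 hcond).2
    exact Nat.sInf_mem (s := {n | ∃ W ⊆ N.erase v, W.card = n ∧ CoversPathsThrough P v W})
      ⟨W₀.card, W₀, hW₀, rfl, hcov₀⟩

theorem exists_path_inter_eq_empty_of_card_lt_MSC {F : Finset V} (hF : F ⊆ N) (hvF : v ∉ F)
    (hlt : F.card < MSC N P v) : ∃ p ∈ P, v ∈ p ∧ p ∩ F = ∅ := by
  by_contra! h
  have hcov : CoversPathsThrough P v F := fun p hp hvp => by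
    obtain ⟨w, hw⟩ := h p hp hvp
    exact ⟨w, (mem_inter.1 hw).2, (mem_inter.1 hw).1⟩
  have hFN : F ⊆ N.erase v := fun x hx => mem_erase.2 ⟨ne_of_mem_of_not_mem hx hvF, hF hx⟩
  exact (MSC_le_card_of_covers hFN hcov).not_gt hlt

theorem inter_insert_eq_empty_iff_of_covers (hcov : CoversPathsThrough P v W) {p : Finset V}
    (hp : p ∈ P) : p ∩ insert v W = ∅ ↔ p ∩ W = ∅ := by
  simp only [← disjoint_iff_inter_eq_empty, disjoint_insert_right, and_iff_right_iff_imp]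
  intro hpW hvp
  obtain ⟨w, hwW, hwp⟩ := hcov p hp hvp
  exact disjoint_left.1 hpW hwp hwW

theorem kIdent_singleton_of_lt_MSC {k : ℕ} (hlt : k < MSC N P v) : kIdent N P {v} k := by
  have separate : ∀ F₁ F₂ : Finset V, F₂ ⊆ N → F₂.card ≤ k → v ∈ F₁ → v ∉ F₂ →
      ∃ p ∈ P, Xor (p ∩ F₁ = ∅) (p ∩ F₂ = ∅) := by
    intro F₁ F₂ hF₂ hcard hv₁ hv₂
    obtain ⟨p, hp, hvp, hpF₂⟩ :=
      exists_path_inter_eq_empty_of_card_lt_MSC hF₂ hv₂ (hcard.trans_lt hlt)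
    exact ⟨p, hp, Or.inr ⟨hpF₂, nonempty_iff_ne_empty.1 ⟨v, mem_inter.2 ⟨hvp, hv₁⟩⟩⟩⟩
  intro F₁ F₂ hF₁ hF₂ hc₁ hc₂ hne
  by_cases hv₁ : v ∈ F₁ <;> by_cases hv₂ : v ∈ F₂
  · simp [hv₁, hv₂] at hne
  · exact separate F₁ F₂ hF₂ hc₂ hv₁ hv₂
  · obtain ⟨p, hp, hxor⟩ := separate F₂ F₁ hF₁ hc₁ hv₂ hv₁
    exact ⟨p, hp, hxor.symm⟩
  · simp [hv₁, hv₂] at hne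

theorem le_MSC_of_kIdent {S : Finset V} {k : ℕ} (hk : k ≤ N.card) (hvN : v ∈ N) (hvS : v ∈ S)
    (hS : kIdent N P S k) : k ≤ MSC N P v := by
  by_contra! hlt
  obtain ⟨W, hWN, hWcard, hcov⟩ := exists_covers_card_eq_MSC (hlt.trans_le hk)
  have hvW : v ∉ W := fun h => (mem_erase.1 (hWN h)).1 rfl
  have hW : W ⊆ N := hWN.trans (erase_subset v N)
  have hdiffer : insert v W ∩ S ≠ W ∩ S := fun h =>
    hvW (mem_inter.1 (h ▸ mem_inter.2 ⟨mem_insert_self v W, hvS⟩)).1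
  obtain ⟨p, hp, hxor⟩ := hS (insert v W) W (insert_subset hvN hW) hW
    ((card_insert_le v W).trans (by omega)) (by omega) hdiffer
  rw [inter_insert_eq_empty_iff_of_covers hcov hp] at hxor
  exact xor_self _ |>.mp hxor

end

open Finset in
theorem Sstar_UP_bounds_general (N : Finset V) (P : Set (Finset V)) (k : ℕ)
    (hk : k ≤ N.card - 1) (Sstar : Finset V)
    (hSstar : ∀ v, v ∈ Sstar ↔ ∃ S : Finset V, S ⊆ N ∧ kIdent N P S k ∧ v ∈ S) :
    (∀ v ∈ N, k + 1 ≤ MSC N P v → v ∈ Sstar) ∧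
      (∀ v ∈ Sstar, k ≤ MSC N P v) := by
  refine ⟨fun v hv hlt => ?_, fun v hv => ?_⟩
  · exact (hSstar v).2 ⟨{v}, singleton_subset_iff.2 hv, kIdent_singleton_of_lt_MSC hlt,
      mem_singleton_self v⟩
  · obtain ⟨S, hSN, hS, hvS⟩ := (hSstar v).1 hv
    exact le_MSC_of_kIdent (by omega) (hSN hvS) hvS hS

theorem Sstar_UP_bounds (N : Finset V) (P : Set (Finset V)) (k : ℕ)
    (hk : k ≤ N.card - 1) (hP : ∀ v ∈ N, ∃ p ∈ P, v ∈ p) (Sstar : Finset V)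
    (hSstar : ∀ v, v ∈ Sstar ↔ ∃ S : Finset V, S ⊆ N ∧ kIdent N P S k ∧ v ∈ S) :
    (∀ v ∈ N, k + 1 ≤ MSC N P v → v ∈ Sstar) ∧
      (∀ v ∈ Sstar, k ≤ MSC N P v) :=
  Sstar_UP_bounds_general N P k hk Sstar hSstar
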